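/- arXiv:math/9912215 — 4 statements merged into one kernel-verified Lean document; each statement's English description precedes it below -/
import Mathlib

section
/- Simplified negligibility test for the special Colombeau algebra: Let Ω ⊆ ℝ^s be open and let (u_ε)_{ε∈(0,1]} be a family of smooth functions u_ε : Ω → ℂ which is moderate, i.e. for every compact K ⊆ Ω and every order n ∈ ℕ there exists N ∈ ℕ with sup_{x∈K} ‖iteratedFDeriv n u_ε (x)‖ = O(ε^{-N}) as ε → 0⁺. If for every compact K ⊆ Ω and every m ∈ ℕ one has sup_{x∈K} |u_ε(x)| = O(ε^m) as ε → 0⁺, then the family is negligible: for every compact K ⊆ Ω, every order n ∈ ℕ and every m ∈ ℕ, sup_{x∈K} ‖iteratedFDeriv n u_ε (x)‖ = O(ε^m) as ε → 0⁺. -/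
/-!
The key estimate is the interpolation inequality
`‖Dg(x)‖ ≤ 2 sup_{B(x,h)} ‖g‖ / h + h sup_{B(x,h)} ‖D²g‖`, obtained from the first-order Taylor
estimate in the direction `h v` for unit vectors `v`. Applied to `g = Dⁿ u_ε` with
`h = ε ^ (m + N + 1)`, where `ε ^ (-N)` bounds `Dⁿ⁺² u_ε`, it turns an `O(ε ^ (2m + N + 1))` bound
on `Dⁿ u_ε` into an `O(ε ^ m)` bound on `Dⁿ⁺¹ u_ε`; induction on `n` starting from the
zeroth-order hypothesis concludes. For small `ε` the balls `B(x, h)`, `x ∈ K`, stay in a fixed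
compact thickening of `K` inside `Ω`, where the moderateness and induction bounds hold.
-/

open Set Metric Filter Topology

section

variable {E F : Type*} [NormedAddCommGroup E] [NormedSpace ℝ E]
  [NormedAddCommGroup F] [NormedSpace ℝ F]

theorem norm_fderiv_le_of_forall_mem_closedBall {g : E → F} {x : E} {h M δ : ℝ} (hh : 0 < h)
    (hg : ∀ y ∈ closedBall x h, DifferentiableAt ℝ g y)
    (hM : ∀ y ∈ closedBall x h, ‖g y‖ ≤ M)
    (hδ : ∀ y ∈ closedBall x h, ‖fderiv ℝ g y - fderiv ℝ g x‖ ≤ δ) :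
    ‖fderiv ℝ g x‖ ≤ 2 * M / h + δ := by
  have hx : x ∈ closedBall x h := mem_closedBall_self hh.le
  have hM₀ : 0 ≤ M := (norm_nonneg _).trans (hM x hx)
  have hδ₀ : 0 ≤ δ := (norm_nonneg _).trans (hδ x hx)
  refine ContinuousLinearMap.opNorm_le_of_unit_norm (by positivity) fun v hv => ?_
  set L := fderiv ℝ g x
  have hhv : ‖h • v‖ = h := by rw [norm_smul, hv, Real.norm_of_nonneg hh.le, mul_one]
  have hxv : x + h • v ∈ closedBall x h := by
    rw [mem_closedBall_iff_norm, add_sub_cancel_left, hhv]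
  have htaylor : ‖g (x + h • v) - g x - L (h • v)‖ ≤ δ * h := by
    simpa [hhv] using
      (convex_closedBall x h).norm_image_sub_le_of_norm_fderiv_le' hg hδ hx hxv
  have hLv : h * ‖L v‖ ≤ 2 * M + δ * h :=
    calc h * ‖L v‖ = ‖(g (x + h • v) - g x) - (g (x + h • v) - g x - L (h • v))‖ := by
          rw [sub_sub_cancel, map_smul, norm_smul, Real.norm_of_nonneg hh.le]
      _ ≤ (‖g (x + h • v)‖ + ‖g x‖) + δ * h :=
          (norm_sub_le _ _).trans (add_le_add (norm_sub_le _ _) htaylor)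
      _ ≤ 2 * M + δ * h := by linarith [hM _ hxv, hM x hx]
  rw [div_add' _ _ _ hh.ne', le_div_iff₀ hh]
  linarith

theorem norm_iteratedFDeriv_succ_le {f : E → F} {x : E} {h A B : ℝ} {n : ℕ} (hh : 0 < h)
    (hf : ∀ y ∈ closedBall x h, ContDiffAt ℝ (n + 2) f y)
    (hA : ∀ y ∈ closedBall x h, ‖iteratedFDeriv ℝ n f y‖ ≤ A)
    (hB : ∀ y ∈ closedBall x h, ‖iteratedFDeriv ℝ (n + 2) f y‖ ≤ B) :
    ‖iteratedFDeriv ℝ (n + 1) f x‖ ≤ 2 * A / h + B * h := by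
  have hx : x ∈ closedBall x h := mem_closedBall_self hh.le
  have hB₀ : 0 ≤ B := (norm_nonneg _).trans (hB x hx)
  rw [← norm_fderiv_iteratedFDeriv]
  refine norm_fderiv_le_of_forall_mem_closedBall hh
    (fun y hy => (hf y hy).differentiableAt_iteratedFDeriv (by norm_cast; omega)) hA
    fun y hy => ?_
  rw [fderiv_iteratedFDeriv, Function.comp_apply, Function.comp_apply,
    ← LinearIsometryEquiv.map_sub, LinearIsometryEquiv.norm_map]
  calc ‖iteratedFDeriv ℝ (n + 1) f y - iteratedFDeriv ℝ (n + 1) f x‖ ≤ B * ‖y - x‖ :=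
        (convex_closedBall x h).norm_image_sub_le_of_norm_fderiv_le
          (fun z hz => (hf z hz).differentiableAt_iteratedFDeriv (by norm_cast; omega))
          (fun z hz => norm_fderiv_iteratedFDeriv.trans_le (hB z hz)) hx hy
    _ ≤ B * h := by gcongr; exact mem_closedBall_iff_norm.mp hy

/-- `a ε x = O(ε ^ p)` as `ε → 0⁺`, uniformly for `x ∈ K`. -/
def IsBigOPowOn {α : Type*} (a : ℝ → α → ℝ) (p : ℝ) (K : Set α) : Prop :=
  ∃ C > (0:ℝ), ∃ ε₀ ∈ Ioc (0:ℝ) 1, ∀ ε ∈ Ioo (0:ℝ) ε₀, ∀ x ∈ K, a ε x ≤ C * ε ^ p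

theorem isBigOPowOn_iff_eventually {α : Type*} {a : ℝ → α → ℝ} {p : ℝ} {K : Set α} :
    IsBigOPowOn a p K ↔ ∃ C > (0:ℝ), ∀ᶠ ε in 𝓝[>] 0, ∀ x ∈ K, a ε x ≤ C * ε ^ p := by
  constructor
  · rintro ⟨C, hC, ε₀, hε₀, hbound⟩
    exact ⟨C, hC, mem_of_superset (Ioo_mem_nhdsGT hε₀.1) hbound⟩
  · rintro ⟨C, hC, hbound⟩
    obtain ⟨ε₀, hε₀, hsub⟩ := mem_nhdsGT_iff_exists_Ioo_subset.mp hbound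
    exact ⟨C, hC, min ε₀ 1, ⟨lt_min hε₀ one_pos, min_le_right _ _⟩,
      fun ε hε => hsub ⟨hε.1, hε.2.trans_le (min_le_left _ _)⟩⟩

theorem IsBigOPowOn.norm_iteratedFDeriv_succ {u : ℝ → E → F} {K : Set E} {r : ℝ} (hr : 0 < r)
    {n m N : ℕ} (hu : ∀ ε ∈ Ioc (0:ℝ) 1, ∀ y ∈ cthickening r K, ContDiffAt ℝ (n + 2) (u ε) y)
    (hn : IsBigOPowOn (fun ε y => ‖iteratedFDeriv ℝ n (u ε) y‖) ((2 * m + N + 1 : ℕ) : ℝ)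
      (cthickening r K))
    (hn₂ : IsBigOPowOn (fun ε y => ‖iteratedFDeriv ℝ (n + 2) (u ε) y‖) (-(N : ℝ))
      (cthickening r K)) :
    IsBigOPowOn (fun ε x => ‖iteratedFDeriv ℝ (n + 1) (u ε) x‖) m K := by
  rw [isBigOPowOn_iff_eventually] at hn hn₂ ⊢
  obtain ⟨C₀, hC₀, hn⟩ := hn
  obtain ⟨C₂, hC₂, hn₂⟩ := hn₂
  refine ⟨2 * C₀ + C₂, by positivity, ?_⟩
  filter_upwards [hn, hn₂, Ioo_mem_nhdsGT (lt_min hr one_pos)] with ε hεn hεn₂ ⟨hε, hεr1⟩ x hx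
  have hεr : ε < r := hεr1.trans_le (min_le_left _ _)
  have hε1 : ε ≤ 1 := (hεr1.trans_le (min_le_right _ _)).le
  set h := ε ^ ((m : ℝ) + N + 1)
  have hh : 0 < h := Real.rpow_pos_of_pos hε _
  have hhε : h ≤ ε := by
    have hexp : (1:ℝ) ≤ m + N + 1 := le_add_of_nonneg_left (by positivity)
    simpa using Real.rpow_le_rpow_of_exponent_ge hε hε1 hexp
  have hball : closedBall x h ⊆ cthickening r K :=
    (closedBall_subset_closedBall (hhε.trans hεr.le)).trans (closedBall_subset_cthickening hx r)
  have hA : ε ^ ((2 * m + N + 1 : ℕ) : ℝ) = ε ^ (m : ℝ) * h := by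
    rw [← Real.rpow_add hε]; push_cast; ring_nf
  have hB : ε ^ (-(N : ℝ)) * h = ε ^ (m : ℝ) * ε := by
    rw [← Real.rpow_add hε, ← Real.rpow_add_one hε.ne']; ring_nf
  calc ‖iteratedFDeriv ℝ (n + 1) (u ε) x‖
      ≤ 2 * (C₀ * ε ^ ((2 * m + N + 1 : ℕ) : ℝ)) / h + C₂ * ε ^ (-(N : ℝ)) * h :=
        norm_iteratedFDeriv_succ_le hh (fun y hy => hu ε ⟨hε, hε1⟩ y (hball hy))
          (fun y hy => hεn y (hball hy)) (fun y hy => hεn₂ y (hball hy))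
    _ = 2 * C₀ * ε ^ (m : ℝ) + C₂ * ε ^ (m : ℝ) * ε := by
        rw [hA, mul_assoc C₂, hB]; field_simp
    _ ≤ (2 * C₀ + C₂) * ε ^ (m : ℝ) := by
        have := mul_le_of_le_one_right (by positivity : 0 ≤ C₂ * ε ^ (m : ℝ)) hε1
        linarith

end

/-- **Simplified negligibility test for the special Colombeau algebra.**
If a moderate family `(u ε)` of smooth functions on an open set `Ω ⊆ ℝ^s` satisfies
the zeroth-order negligibility estimates on every compact subset, then it satisfies
the negligibility estimates for all derivatives. -/
theorem simplified_negligibility_special_algebra {s : ℕ}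
    (Ω : Set (Fin s → ℝ)) (hΩ : IsOpen Ω)
    (u : ℝ → (Fin s → ℝ) → ℂ)
    (hsmooth : ∀ ε ∈ Ioc (0:ℝ) 1, ContDiffOn ℝ (⊤ : ℕ∞) (u ε) Ω)
    (hmoderate : ∀ K : Set (Fin s → ℝ), K ⊆ Ω → IsCompact K → ∀ n : ℕ,
      ∃ N : ℕ, ∃ C > (0:ℝ), ∃ ε₀ ∈ Ioc (0:ℝ) 1, ∀ ε ∈ Ioo (0:ℝ) ε₀, ∀ x ∈ K,
        ‖iteratedFDeriv ℝ n (u ε) x‖ ≤ C * ε ^ (-(N:ℝ)))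
    (hzero : ∀ K : Set (Fin s → ℝ), K ⊆ Ω → IsCompact K → ∀ m : ℕ,
      ∃ C > (0:ℝ), ∃ ε₀ ∈ Ioc (0:ℝ) 1, ∀ ε ∈ Ioo (0:ℝ) ε₀, ∀ x ∈ K,
        ‖u ε x‖ ≤ C * ε ^ (m:ℝ)) :
    ∀ K : Set (Fin s → ℝ), K ⊆ Ω → IsCompact K → ∀ n : ℕ, ∀ m : ℕ,
      ∃ C > (0:ℝ), ∃ ε₀ ∈ Ioc (0:ℝ) 1, ∀ ε ∈ Ioo (0:ℝ) ε₀, ∀ x ∈ K,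
        ‖iteratedFDeriv ℝ n (u ε) x‖ ≤ C * ε ^ (m:ℝ) := by
  suffices H : ∀ n : ℕ, ∀ K, K ⊆ Ω → IsCompact K → ∀ m : ℕ,
      IsBigOPowOn (fun ε x => ‖iteratedFDeriv ℝ n (u ε) x‖) m K from
    fun K hKΩ hK n m => H n K hKΩ hK m
  intro n
  induction n with
  | zero => simpa [IsBigOPowOn] using hzero
  | succ n ih =>
    intro K hKΩ hK m
    obtain ⟨r, hr, hrΩ⟩ := hK.exists_cthickening_subset_open hΩ hKΩ
    obtain ⟨N, hN⟩ := hmoderate _ hrΩ hK.cthickening (n + 2)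
    exact IsBigOPowOn.norm_iteratedFDeriv_succ hr
      (fun ε hε y hy => ((hsmooth ε hε).contDiffAt (hΩ.mem_nhds (hrΩ hy))).of_le
        (WithTop.coe_le_coe.mpr le_top))
      (ih _ hrΩ hK.cthickening _) hN
end

section
/- Let Ω ⊆ ℝ^s be open, let c : (0,1] × Ω → ℝ be such that for each ε the map x ↦ c(ε,x) has first and second partial derivatives in the i-th coordinate direction (for some fixed i ∈ {1,…,s}). Let q > 0 and 0 ≤ r < 1 be real numbers, and let K, L be compact sets with K ⊆ interior(L) and L ⊆ Ω. If sup_{x∈L} |c(ε,x)| = O(ε^q) and sup_{x∈L} |∂_i² c(ε,x)| = O(ε^{rq}) as ε → 0⁺, then sup_{x∈K} |∂_i c(ε,x)| = O(ε^{(1+r)q/2}) as ε → 0⁺. -/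
open Set

/-!
Fix `x ∈ K` and restrict `c(ε,·)` to the segment of length `h` starting at `x` in direction
`e_i`. Two applications of the mean value theorem give the one-dimensional Landau inequality
`|f'(a)| ≤ 2 sup|f| / h + h sup|f''|` on `[a, a + h]`. The segment stays in `L` as long as `h`
is below a fixed thickening radius `δ` of `K` inside `interior L`, and the choice
`h = δ ε^((1-r)q/2)` balances the two terms to `O(ε^((1+r)q/2))`.
-/

theorem abs_deriv_le_of_abs_le_of_abs_deriv2_le {f f' f'' : ℝ → ℝ} {a h M₀ M₂ : ℝ}
    (hh : 0 < h) (hf : ∀ t ∈ Icc a (a + h), HasDerivAt f (f' t) t)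
    (hf' : ∀ t ∈ Icc a (a + h), HasDerivAt f' (f'' t) t)
    (hM₀ : ∀ t ∈ Icc a (a + h), |f t| ≤ M₀) (hM₂ : ∀ t ∈ Icc a (a + h), |f'' t| ≤ M₂) :
    |f' a| ≤ 2 * M₀ / h + h * M₂ := by
  have hlt : a < a + h := by linarith
  obtain ⟨ξ, hξ, hslope⟩ := exists_hasDerivAt_eq_slope f f' hlt
    (fun t ht => (hf t ht).continuousAt.continuousWithinAt)
    (fun t ht => hf t (Ioo_subset_Icc_self ht))
  have hξIcc : Icc a ξ ⊆ Icc a (a + h) := Icc_subset_Icc le_rfl hξ.2.le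
  obtain ⟨η, hη, hslope'⟩ := exists_hasDerivAt_eq_slope f' f'' hξ.1
    (fun t ht => (hf' t (hξIcc ht)).continuousAt.continuousWithinAt)
    (fun t ht => hf' t (hξIcc (Ioo_subset_Icc_self ht)))
  have hξa : 0 < ξ - a := sub_pos.2 hξ.1
  have bound_ξ : |f' ξ| ≤ 2 * M₀ / h := by
    rw [hslope, add_sub_cancel_left, abs_div, abs_of_pos hh, div_le_div_iff_of_pos_right hh]
    calc |f (a + h) - f a| ≤ |f (a + h)| + |f a| := abs_sub _ _
      _ ≤ 2 * M₀ := by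
        linarith [hM₀ _ ⟨hlt.le, le_rfl⟩, hM₀ _ ⟨le_rfl, hlt.le⟩]
  have bound_diff : |f' ξ - f' a| ≤ h * M₂ := by
    have hdiff : f' ξ - f' a = (ξ - a) * f'' η := by
      rw [hslope']; field_simp
    rw [hdiff, abs_mul, abs_of_pos hξa]
    exact mul_le_mul (by linarith [hξ.2]) (hM₂ η (hξIcc (Ioo_subset_Icc_self hη)))
      (abs_nonneg _) hh.le
  calc |f' a| = |f' ξ - (f' ξ - f' a)| := by rw [sub_sub_cancel]
    _ ≤ |f' ξ| + |f' ξ - f' a| := abs_sub _ _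
    _ ≤ 2 * M₀ / h + h * M₂ := add_le_add bound_ξ bound_diff

theorem update_mem_of_cthickening_subset {ι : Type*} [Fintype ι] [DecidableEq ι]
    {K U : Set (ι → ℝ)} {δ : ℝ} (hδ : 0 ≤ δ) (hKU : Metric.cthickening δ K ⊆ U)
    {x : ι → ℝ} (hx : x ∈ K) (i : ι) {t : ℝ} (ht : |t - x i| ≤ δ) :
    Function.update x i t ∈ U := by
  refine hKU (Metric.mem_cthickening_of_dist_le _ x δ K hx ((dist_pi_le_iff hδ).2 fun j => ?_))
  rcases eq_or_ne j i with rfl | hj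
  · simpa [Real.dist_eq] using ht
  · simpa [Function.update_of_ne hj] using hδ

theorem hasDerivAt_comp_update_of_mem {ι : Type*} [DecidableEq ι] {Ω : Set (ι → ℝ)}
    {f g : (ι → ℝ) → ℝ} {i : ι}
    (hd : ∀ y ∈ Ω, HasDerivAt (fun t => f (Function.update y i t)) (g y) (y i))
    {x : ι → ℝ} {t : ℝ} (ht : Function.update x i t ∈ Ω) :
    HasDerivAt (fun u => f (Function.update x i u)) (g (Function.update x i t)) t := by
  simpa using hd _ ht

theorem landau_bound_rpow_eq {ε : ℝ} (hε : 0 < ε) (δ C₀ C₂ q r : ℝ) :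
    2 * (C₀ * ε ^ q) / (δ * ε ^ ((1 - r) * q / 2)) + δ * ε ^ ((1 - r) * q / 2) * (C₂ * ε ^ (r * q))
      = (2 * C₀ / δ + δ * C₂) * ε ^ ((1 + r) * q / 2) := by
  have hq : ε ^ q = ε ^ ((1 + r) * q / 2) * ε ^ ((1 - r) * q / 2) := by
    rw [← Real.rpow_add hε]; ring_nf
  have hrq : ε ^ ((1 - r) * q / 2) * ε ^ (r * q) = ε ^ ((1 + r) * q / 2) := by
    rw [← Real.rpow_add hε]; ring_nf
  rw [hq, mul_assoc δ, mul_left_comm _ C₂, hrq]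
  field_simp

theorem landau_interpolation_general {s : ℕ}
    (Ω : Set (Fin s → ℝ)) (i : Fin s)
    (c c1 c2 : ℝ → (Fin s → ℝ) → ℝ)
    (hd1 : ∀ ε ∈ Ioc (0:ℝ) 1, ∀ x ∈ Ω,
      HasDerivAt (fun t => c ε (Function.update x i t)) (c1 ε x) (x i))
    (hd2 : ∀ ε ∈ Ioc (0:ℝ) 1, ∀ x ∈ Ω,
      HasDerivAt (fun t => c1 ε (Function.update x i t)) (c2 ε x) (x i))
    (q r : ℝ) (hq : 0 < q) (hr1 : r < 1)
    (K L : Set (Fin s → ℝ)) (hK : IsCompact K)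
    (hKL : K ⊆ interior L) (hLΩ : L ⊆ Ω)
    (h0 : ∃ C > (0:ℝ), ∃ ε₀ ∈ Ioc (0:ℝ) 1, ∀ ε ∈ Ioo (0:ℝ) ε₀, ∀ x ∈ L,
      |c ε x| ≤ C * ε ^ q)
    (h2 : ∃ C > (0:ℝ), ∃ ε₀ ∈ Ioc (0:ℝ) 1, ∀ ε ∈ Ioo (0:ℝ) ε₀, ∀ x ∈ L,
      |c2 ε x| ≤ C * ε ^ (r * q)) :
    ∃ C > (0:ℝ), ∃ ε₀ ∈ Ioc (0:ℝ) 1, ∀ ε ∈ Ioo (0:ℝ) ε₀, ∀ x ∈ K,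
      |c1 ε x| ≤ C * ε ^ ((1 + r) * q / 2) := by
  obtain ⟨C₀, hC₀, ε₁, hε₁, hc⟩ := h0
  obtain ⟨C₂, hC₂, ε₂, hε₂, hc2⟩ := h2
  obtain ⟨δ, hδ, hKδ⟩ := hK.exists_cthickening_subset_open isOpen_interior hKL
  refine ⟨2 * C₀ / δ + δ * C₂, by positivity, min ε₁ ε₂,
    ⟨lt_min hε₁.1 hε₂.1, (min_le_left _ _).trans hε₁.2⟩, fun ε hε x hx => ?_⟩
  have hε₁' : ε ∈ Ioo 0 ε₁ := ⟨hε.1, hε.2.trans_le (min_le_left _ _)⟩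
  have hε₂' : ε ∈ Ioo 0 ε₂ := ⟨hε.1, hε.2.trans_le (min_le_right _ _)⟩
  have hε' : ε ∈ Ioc 0 1 := ⟨hε.1, (hε₁'.2.trans_le hε₁.2).le⟩
  set h := δ * ε ^ ((1 - r) * q / 2)
  have hh : 0 < h := mul_pos hδ (Real.rpow_pos_of_pos hε.1 _)
  have hhδ : h ≤ δ := mul_le_of_le_one_right hδ.le
    (Real.rpow_le_one hε.1.le hε'.2 (by nlinarith))
  have segment_mem : ∀ t ∈ Icc (x i) (x i + h), Function.update x i t ∈ L := fun t ht =>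
    interior_subset <| update_mem_of_cthickening_subset hδ.le hKδ hx i
      (abs_le.2 ⟨by linarith [ht.1], by linarith [ht.2]⟩)
  have hlandau := abs_deriv_le_of_abs_le_of_abs_deriv2_le hh
    (fun t ht => hasDerivAt_comp_update_of_mem (hd1 ε hε') (hLΩ (segment_mem t ht)))
    (fun t ht => hasDerivAt_comp_update_of_mem (hd2 ε hε') (hLΩ (segment_mem t ht)))
    (fun t ht => hc ε hε₁' _ (segment_mem t ht)) (fun t ht => hc2 ε hε₂' _ (segment_mem t ht))
  rwa [Function.update_eq_self, landau_bound_rpow_eq hε.1] at hlandau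

/-- **Landau-type interpolation lemma (Lemma on `∂_i c`).**
If `c(ε,·)` has first and second partial derivatives `c1`, `c2` in the `i`-th coordinate
direction on the open set `Ω`, `sup_L |c(ε,·)| = O(ε^q)` and `sup_L |∂_i²c(ε,·)| = O(ε^{rq})`
with `q > 0`, `0 ≤ r < 1`, and `K ⊆ interior L`, `L ⊆ Ω` compact, then
`sup_K |∂_i c(ε,·)| = O(ε^{(1+r)q/2})`. -/
theorem landau_interpolation {s : ℕ}
    (Ω : Set (Fin s → ℝ)) (hΩ : IsOpen Ω) (i : Fin s)
    (c c1 c2 : ℝ → (Fin s → ℝ) → ℝ)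
    (hd1 : ∀ ε ∈ Ioc (0:ℝ) 1, ∀ x ∈ Ω,
      HasDerivAt (fun t => c ε (Function.update x i t)) (c1 ε x) (x i))
    (hd2 : ∀ ε ∈ Ioc (0:ℝ) 1, ∀ x ∈ Ω,
      HasDerivAt (fun t => c1 ε (Function.update x i t)) (c2 ε x) (x i))
    (q r : ℝ) (hq : 0 < q) (hr0 : 0 ≤ r) (hr1 : r < 1)
    (K L : Set (Fin s → ℝ)) (hK : IsCompact K) (hL : IsCompact L)
    (hKL : K ⊆ interior L) (hLΩ : L ⊆ Ω)
    (h0 : ∃ C > (0:ℝ), ∃ ε₀ ∈ Ioc (0:ℝ) 1, ∀ ε ∈ Ioo (0:ℝ) ε₀, ∀ x ∈ L,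
      |c ε x| ≤ C * ε ^ q)
    (h2 : ∃ C > (0:ℝ), ∃ ε₀ ∈ Ioc (0:ℝ) 1, ∀ ε ∈ Ioo (0:ℝ) ε₀, ∀ x ∈ L,
      |c2 ε x| ≤ C * ε ^ (r * q)) :
    ∃ C > (0:ℝ), ∃ ε₀ ∈ Ioc (0:ℝ) 1, ∀ ε ∈ Ioo (0:ℝ) ε₀, ∀ x ∈ K,
      |c1 ε x| ≤ C * ε ^ ((1 + r) * q / 2) :=
  landau_interpolation_general Ω i c c1 c2 hd1 hd2 q r hq hr1 K L hK hKL hLΩ h0 h2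
end

section
/- Landau-type derivative estimate with negative-order second derivative (key step in the simplified negligibility criterion): Let Ω ⊆ ℝ^s be open, let K, L be compact sets with K ⊆ interior(L) and L ⊆ Ω, fix i ∈ {1,…,s} and n, N ∈ ℕ. Let c : (0,1] × Ω → ℝ be such that for each ε the map x ↦ c(ε,x) has first and second partial derivatives in the i-th coordinate direction. If sup_{x∈L} |c(ε,x)| = O(ε^{2n+N}) and sup_{x∈L} |∂_i² c(ε,x)| = O(ε^{-N}) as ε → 0⁺, then sup_{x∈K} |∂_i c(ε,x)| = O(ε^{n}) as ε → 0⁺. -/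
/-!
Fix `x ∈ K` and move only the `i`-th coordinate, by a step `h`. A first-order Taylor bound on the
segment gives `h |∂_i c(x)| ≤ 2 sup_L |c| + h² sup_L |∂_i² c|`, that is
`|∂_i c(x)| ≲ ε^{2n+N} / h + h ε^{-N}`. The step `h = δ ε^{n+N}`, where `δ` is a margin keeping the
segment inside `L`, makes both terms `O(ε^n)`.
-/

open Set

section Taylor

variable {E : Type*} [NormedAddCommGroup E] [NormedSpace ℝ E] {f f' f'' : ℝ → E} {a b M : ℝ}

theorem norm_sub_sub_smul_le_of_norm_deriv2_le (hab : a ≤ b)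
    (hf : ∀ t ∈ Icc a b, HasDerivWithinAt f (f' t) (Icc a b) t)
    (hf' : ∀ t ∈ Icc a b, HasDerivWithinAt f' (f'' t) (Icc a b) t)
    (hM : ∀ t ∈ Ico a b, ‖f'' t‖ ≤ M) :
    ‖f b - f a - (b - a) • f' a‖ ≤ M * (b - a) ^ 2 := by
  rcases hab.eq_or_lt with rfl | hab
  · simp
  have hM0 : 0 ≤ M := (norm_nonneg _).trans (hM a (left_mem_Ico.2 hab))
  have hvar : ∀ t ∈ Icc a b, ‖f' t - f' a‖ ≤ M * (t - a) :=
    norm_image_sub_le_of_norm_deriv_le_segment' hf' hM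
  have hrem : ∀ t ∈ Icc a b, HasDerivWithinAt (fun u => f u - (u - a) • f' a)
      (f' t - f' a) (Icc a b) t := fun t ht => by
    have := (hf t ht).sub (((hasDerivWithinAt_id t _).sub_const a).smul_const (f' a))
    rwa [one_smul] at this
  have hrem_bound : ∀ t ∈ Ico a b, ‖f' t - f' a‖ ≤ M * (b - a) := fun t ht =>
    (hvar t (Ico_subset_Icc_self ht)).trans (by gcongr; exact ht.2.le)
  calc ‖f b - f a - (b - a) • f' a‖
      = ‖(f b - (b - a) • f' a) - (f a - (a - a) • f' a)‖ := by
        rw [sub_self, zero_smul, sub_zero, sub_right_comm]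
    _ ≤ M * (b - a) * (b - a) :=
        norm_image_sub_le_of_norm_deriv_le_segment' hrem hrem_bound b (right_mem_Icc.2 hab.le)
    _ = M * (b - a) ^ 2 := by ring

theorem norm_deriv_le_of_norm_le_of_norm_deriv2_le {A h : ℝ} (hh : 0 < h)
    (hf : ∀ t ∈ Icc a (a + h), HasDerivWithinAt f (f' t) (Icc a (a + h)) t)
    (hf' : ∀ t ∈ Icc a (a + h), HasDerivWithinAt f' (f'' t) (Icc a (a + h)) t)
    (hA : ‖f a‖ ≤ A) (hAh : ‖f (a + h)‖ ≤ A) (hM : ∀ t ∈ Ico a (a + h), ‖f'' t‖ ≤ M) :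
    ‖f' a‖ ≤ 2 * A / h + M * h := by
  have htaylor := norm_sub_sub_smul_le_of_norm_deriv2_le (by linarith) hf hf' hM
  rw [add_sub_cancel_left] at htaylor
  have hsplit : h • f' a = (f (a + h) - f a) - (f (a + h) - f a - h • f' a) := by abel
  have key : h * ‖f' a‖ ≤ 2 * A + M * h ^ 2 := by
    calc h * ‖f' a‖ = ‖h • f' a‖ := by rw [norm_smul, Real.norm_of_nonneg hh.le]
      _ ≤ ‖f (a + h)‖ + ‖f a‖ + M * h ^ 2 := by
        rw [hsplit]
        exact (norm_sub_le _ _).trans (add_le_add (norm_sub_le _ _) htaylor)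
      _ ≤ 2 * A + M * h ^ 2 := by linarith
  rw [div_add' _ _ _ hh.ne', le_div_iff₀ hh]
  linarith

end Taylor

theorem IsCompact.exists_pos_forall_update_mem {ι E : Type*} [Fintype ι] [DecidableEq ι]
    [PseudoMetricSpace E] {K L : Set (ι → E)} (hK : IsCompact K) (hKL : K ⊆ interior L) :
    ∃ δ > 0, ∀ x ∈ K, ∀ i t, dist t (x i) ≤ δ → Function.update x i t ∈ L := by
  obtain ⟨δ, hδ, hthick⟩ := hK.exists_cthickening_subset_open isOpen_interior hKL
  refine ⟨δ, hδ, fun x hx i t ht => interior_subset (hthick ?_)⟩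
  refine Metric.mem_cthickening_of_dist_le _ x δ K hx ((dist_pi_le_iff hδ.le).2 fun j => ?_)
  rcases eq_or_ne j i with rfl | hj
  · simpa using ht
  · simpa [Function.update_of_ne hj] using hδ.le

theorem norm_lineDeriv_le_of_norm_le_of_norm_lineDeriv2_le {ι F : Type*} [DecidableEq ι]
    [NormedAddCommGroup F] [NormedSpace ℝ F] {L : Set (ι → ℝ)} {g g' g'' : (ι → ℝ) → F}
    {i : ι} {x : ι → ℝ} {h A M : ℝ} (hh : 0 < h)
    (hg : ∀ y ∈ L, HasDerivAt (fun t => g (Function.update y i t)) (g' y) (y i))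
    (hg' : ∀ y ∈ L, HasDerivAt (fun t => g' (Function.update y i t)) (g'' y) (y i))
    (hA : ∀ y ∈ L, ‖g y‖ ≤ A) (hM : ∀ y ∈ L, ‖g'' y‖ ≤ M)
    (hseg : ∀ t ∈ Icc (x i) (x i + h), Function.update x i t ∈ L) :
    ‖g' x‖ ≤ 2 * A / h + M * h := by
  have hline : ∀ {φ φ' : (ι → ℝ) → F},
      (∀ y ∈ L, HasDerivAt (fun t => φ (Function.update y i t)) (φ' y) (y i)) →
      ∀ t ∈ Icc (x i) (x i + h), HasDerivWithinAt (fun u => φ (Function.update x i u))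
        (φ' (Function.update x i t)) (Icc (x i) (x i + h)) t := fun hφ t ht => by
    simpa using (hφ _ (hseg t ht)).hasDerivWithinAt
  have hx : x ∈ L := by simpa using hseg (x i) (left_mem_Icc.2 (by linarith))
  simpa using norm_deriv_le_of_norm_le_of_norm_deriv2_le hh (hline hg) (hline hg')
    (by simpa using hA x hx)
    (hA _ (hseg _ (right_mem_Icc.2 (by linarith))))
    (fun t ht => hM _ (hseg t (Ico_subset_Icc_self ht)))

theorem landau_negative_order_general {s : ℕ}
    (Ω : Set (Fin s → ℝ)) (i : Fin s) (n N : ℕ)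
    (K L : Set (Fin s → ℝ)) (hK : IsCompact K)
    (hKL : K ⊆ interior L) (hLΩ : L ⊆ Ω)
    (c c1 c2 : ℝ → (Fin s → ℝ) → ℝ)
    (hd1 : ∀ ε ∈ Ioc (0:ℝ) 1, ∀ x ∈ Ω,
      HasDerivAt (fun t => c ε (Function.update x i t)) (c1 ε x) (x i))
    (hd2 : ∀ ε ∈ Ioc (0:ℝ) 1, ∀ x ∈ Ω,
      HasDerivAt (fun t => c1 ε (Function.update x i t)) (c2 ε x) (x i))
    (h0 : ∃ C > (0:ℝ), ∃ ε₀ ∈ Ioc (0:ℝ) 1, ∀ ε ∈ Ioo (0:ℝ) ε₀, ∀ x ∈ L,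
      |c ε x| ≤ C * ε ^ (2 * (n:ℝ) + (N:ℝ)))
    (h2 : ∃ C > (0:ℝ), ∃ ε₀ ∈ Ioc (0:ℝ) 1, ∀ ε ∈ Ioo (0:ℝ) ε₀, ∀ x ∈ L,
      |c2 ε x| ≤ C * ε ^ (-(N:ℝ))) :
    ∃ C > (0:ℝ), ∃ ε₀ ∈ Ioc (0:ℝ) 1, ∀ ε ∈ Ioo (0:ℝ) ε₀, ∀ x ∈ K,
      |c1 ε x| ≤ C * ε ^ (n:ℝ) := by
  obtain ⟨C₀, hC₀, ε₁, hε₁, hc⟩ := h0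
  obtain ⟨C₂, hC₂, ε₂, hε₂, hc2⟩ := h2
  obtain ⟨δ, hδ, hKδ⟩ := hK.exists_pos_forall_update_mem hKL
  refine ⟨2 * C₀ / δ + C₂ * δ, by positivity, min ε₁ ε₂,
    ⟨lt_min hε₁.1 hε₂.1, (min_le_left _ _).trans hε₁.2⟩, fun ε hε x hx => ?_⟩
  have hε0 : 0 < ε := hε.1
  have hεC₀ : ε < ε₁ := hε.2.trans_le (min_le_left _ _)
  have hεC₂ : ε < ε₂ := hε.2.trans_le (min_le_right _ _)
  have hε1 : ε ∈ Ioc (0:ℝ) 1 := ⟨hε0, hεC₀.le.trans hε₁.2⟩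
  have hstep_le : δ * ε ^ (n + N) ≤ δ := mul_le_of_le_one_right hδ.le (pow_le_one₀ hε0.le hε1.2)
  calc |c1 ε x|
      ≤ 2 * (C₀ * ε ^ (2 * (n:ℝ) + (N:ℝ))) / (δ * ε ^ (n + N))
        + C₂ * ε ^ (-(N:ℝ)) * (δ * ε ^ (n + N)) := by
        simp only [← Real.norm_eq_abs] at hc hc2 ⊢
        refine norm_lineDeriv_le_of_norm_le_of_norm_lineDeriv2_le (by positivity)
          (fun y hy => hd1 ε hε1 y (hLΩ hy)) (fun y hy => hd2 ε hε1 y (hLΩ hy))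
          (hc ε ⟨hε0, hεC₀⟩) (hc2 ε ⟨hε0, hεC₂⟩) fun t ht => hKδ x hx i t ?_
        rw [Real.dist_eq, abs_of_nonneg (by linarith [ht.1])]
        linarith [ht.2]
    _ = (2 * C₀ / δ + C₂ * δ) * ε ^ (n:ℝ) := by
        rw [show 2 * (n:ℝ) + N = ((2 * n + N : ℕ) : ℝ) by push_cast; ring, Real.rpow_neg hε0.le,
          Real.rpow_natCast, Real.rpow_natCast, Real.rpow_natCast]
        field_simp
        ring

/-- **Landau-type derivative estimate with negative-order second derivative.**
If `sup_L |c(ε,·)| = O(ε^{2n+N})` and `sup_L |∂_i²c(ε,·)| = O(ε^{-N})`, where `c1`, `c2`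
are the first and second partial derivatives of `c(ε,·)` in the `i`-th coordinate
direction on `Ω`, and `K ⊆ interior L`, `L ⊆ Ω` are compact, then
`sup_K |∂_i c(ε,·)| = O(ε^{n})`. -/
theorem landau_negative_order {s : ℕ}
    (Ω : Set (Fin s → ℝ)) (hΩ : IsOpen Ω) (i : Fin s) (n N : ℕ)
    (K L : Set (Fin s → ℝ)) (hK : IsCompact K) (hL : IsCompact L)
    (hKL : K ⊆ interior L) (hLΩ : L ⊆ Ω)
    (c c1 c2 : ℝ → (Fin s → ℝ) → ℝ)
    (hd1 : ∀ ε ∈ Ioc (0:ℝ) 1, ∀ x ∈ Ω,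
      HasDerivAt (fun t => c ε (Function.update x i t)) (c1 ε x) (x i))
    (hd2 : ∀ ε ∈ Ioc (0:ℝ) 1, ∀ x ∈ Ω,
      HasDerivAt (fun t => c1 ε (Function.update x i t)) (c2 ε x) (x i))
    (h0 : ∃ C > (0:ℝ), ∃ ε₀ ∈ Ioc (0:ℝ) 1, ∀ ε ∈ Ioo (0:ℝ) ε₀, ∀ x ∈ L,
      |c ε x| ≤ C * ε ^ (2 * (n:ℝ) + (N:ℝ)))
    (h2 : ∃ C > (0:ℝ), ∃ ε₀ ∈ Ioc (0:ℝ) 1, ∀ ε ∈ Ioo (0:ℝ) ε₀, ∀ x ∈ L,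
      |c2 ε x| ≤ C * ε ^ (-(N:ℝ))) :
    ∃ C > (0:ℝ), ∃ ε₀ ∈ Ioc (0:ℝ) 1, ∀ ε ∈ Ioo (0:ℝ) ε₀, ∀ x ∈ K,
      |c1 ε x| ≤ C * ε ^ (n:ℝ) :=
  landau_negative_order_general Ω i n N K L hK hKL hLΩ c c1 c2 hd1 hd2 h0 h2
end

section
/- Derivative transfer for asymptotically small smooth families (analytic core of the theorem that every test object of type [A_g]_q is of type [A_g^∞]_{q-1}): Let Ω ⊆ ℝ^s be open, let q ∈ ℕ with q ≥ 2, and let c : (0,1] × Ω → ℝ be such that for each ε the map x ↦ c(ε,x) is smooth on Ω. Assume that for every compact L ⊆ Ω and every multi-index β, sup_{x∈L} |∂^β c(ε,x)| = O(1) as ε → 0⁺, and that for every compact L ⊆ Ω, sup_{x∈L} |c(ε,x)| = O(ε^q) as ε → 0⁺. Then for every compact K ⊆ Ω and every multi-index β, sup_{x∈K} |∂^β c(ε,x)| = O(ε^{q-1}) as ε → 0⁺. -/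
/-!
By Taylor's theorem and a finite-difference stencil on the nodes `t₀, t₀ + h, …, t₀ + n h` that
is exact for polynomials of degree `n`, a Markov-type estimate
`|ψ'(t₀)| ≤ C (sup |ψ| / h + sup |ψ⁽ⁿ⁺¹⁾| hⁿ)` holds. Along coordinate lines with
`h ≍ ε ^ (a / (n + 1))`, a family that is `O(ε ^ a)` on compacts and has bounded derivatives
therefore has first partial derivatives `O(ε ^ (a n / (n + 1)))`, hence `O(ε ^ b)` for any
prescribed `b < a` once `n` is large. Iterating along the multi-index, `∂^β c = O(ε ^ b)` for
every `b < q`, in particular for `b = q - 1`.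
-/

open Set

/-- Partial derivative in the `i`-th coordinate direction. -/
noncomputable def pd {s : ℕ} (i : Fin s) (f : (Fin s → ℝ) → ℝ) : (Fin s → ℝ) → ℝ :=
  fun x => deriv (fun t => f (Function.update x i t)) (x i)

/-- Iterated partial derivative `∂^β` along a finite sequence of coordinate directions
(a multi-index). -/
noncomputable def pdMulti {s : ℕ} : List (Fin s) → ((Fin s → ℝ) → ℝ) → (Fin s → ℝ) → ℝ
  | [], f => f
  | i :: l, f => pd i (pdMulti l f)

section PartialDerivatives

variable {s : ℕ}

lemma pdMulti_append (l₁ l₂ : List (Fin s)) (f : (Fin s → ℝ) → ℝ) :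
    pdMulti (l₁ ++ l₂) f = pdMulti l₁ (pdMulti l₂ f) := by
  induction l₁ with
  | nil => rfl
  | cons i l ih => simp only [List.cons_append, pdMulti, ih]

lemma iteratedDeriv_comp_update (G : (Fin s → ℝ) → ℝ) (x : Fin s → ℝ) (i : Fin s) (r : ℕ) :
    iteratedDeriv r (fun u => G (Function.update x i u))
      = fun u => pdMulti (List.replicate r i) G (Function.update x i u) := by
  induction r with
  | zero => rfl
  | succ r ih =>
    rw [iteratedDeriv_succ, ih]
    funext u
    simp only [List.replicate_succ, pdMulti, pd, Function.update_idem, Function.update_self]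

lemma pd_eq_fderiv {f : (Fin s → ℝ) → ℝ} {x : Fin s → ℝ} (hf : DifferentiableAt ℝ f x)
    (i : Fin s) : pd i f x = fderiv ℝ f x (Pi.single i 1) := by
  have hx : HasFDerivAt f (fderiv ℝ f x) (Function.update x i (x i)) := by
    rw [Function.update_eq_self]
    exact hf.hasFDerivAt
  exact (hx.comp_hasDerivAt (x i) (hasDerivAt_update x i (x i))).deriv

lemma ContDiffOn.pd {Ω : Set (Fin s → ℝ)} (hΩ : IsOpen Ω) {f : (Fin s → ℝ) → ℝ}
    (hf : ContDiffOn ℝ (⊤ : ℕ∞) f Ω) (i : Fin s) : ContDiffOn ℝ (⊤ : ℕ∞) (pd i f) Ω := by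
  have hfderiv : ContDiffOn ℝ (⊤ : ℕ∞) (fun x => fderiv ℝ f x (Pi.single i 1)) Ω :=
    (hf.fderiv_of_isOpen hΩ (by exact_mod_cast le_top)).clm_apply contDiffOn_const
  refine hfderiv.congr fun x hx => pd_eq_fderiv ?_ i
  exact (hf.differentiableOn (by simp)).differentiableAt (hΩ.mem_nhds hx)

lemma ContDiffOn.pdMulti {Ω : Set (Fin s → ℝ)} (hΩ : IsOpen Ω) {f : (Fin s → ℝ) → ℝ}
    (hf : ContDiffOn ℝ (⊤ : ℕ∞) f Ω) (β : List (Fin s)) :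
    ContDiffOn ℝ (⊤ : ℕ∞) (pdMulti β f) Ω := by
  induction β with
  | nil => exact hf
  | cons i β ih => exact ih.pd hΩ i

end PartialDerivatives

lemma dist_update_self {ι : Type*} [Fintype ι] [DecidableEq ι] {X : ι → Type*}
    [∀ i, PseudoMetricSpace (X i)] (x : ∀ i, X i) (i : ι) (u : X i) :
    dist (Function.update x i u) x = dist u (x i) := by
  refine le_antisymm ((dist_pi_le_iff dist_nonneg).2 fun j => ?_) ?_
  · rcases eq_or_ne j i with rfl | hj
    · simp
    · simp [Function.update_of_ne hj]
  · simpa using dist_le_pi_dist (Function.update x i u) x i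

section FiniteDifferences

open Finset Nat

lemma exists_sum_mul_natCast_pow_eq (n : ℕ) (b : ℕ → ℝ) :
    ∃ W : Fin (n + 1) → ℝ, ∀ r ≤ n, ∑ j, W j * (j : ℝ) ^ r = b r := by
  set A : Matrix (Fin (n + 1)) (Fin (n + 1)) ℝ :=
    (Matrix.vandermonde fun j : Fin (n + 1) => (j : ℝ)).transpose
  have hA : IsUnit A := by
    rw [Matrix.isUnit_iff_isUnit_det, Matrix.det_transpose, isUnit_iff_ne_zero,
      Matrix.det_vandermonde_ne_zero_iff]
    exact fun j k hjk => Fin.ext (Nat.cast_injective hjk)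
  obtain ⟨W, hW⟩ := Matrix.mulVec_surjective_iff_isUnit.2 hA fun r : Fin (n + 1) => b r
  refine ⟨W, fun r hr => ?_⟩
  have := congrFun hW ⟨r, Nat.lt_succ_of_le hr⟩
  simpa [A, Matrix.mulVec, dotProduct, mul_comm] using this

lemma abs_mul_deriv_sub_sum_le {n : ℕ} (hn : 1 ≤ n) {W : Fin (n + 1) → ℝ}
    (hW : ∀ r ≤ n, ∑ j, W j * (j : ℝ) ^ r = if r = 1 then 1 else 0)
    {ψ : ℝ → ℝ} {t₀ h B : ℝ} (hh : 0 < h)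
    (hψ : ∀ t ∈ Icc t₀ (t₀ + n * h), ContDiffAt ℝ (n + 1) ψ t)
    (hB : ∀ t ∈ Icc t₀ (t₀ + n * h), |iteratedDeriv (n + 1) ψ t| ≤ B) :
    |h * deriv ψ t₀ - ∑ j, W j * ψ (t₀ + j * h)|
      ≤ (∑ j, |W j|) * ((n : ℝ) ^ (n + 1) / n !) * B * h ^ (n + 1) := by
  set I := Icc t₀ (t₀ + n * h)
  have hnh : 0 < (n : ℝ) * h := mul_pos (by exact_mod_cast hn) hh
  have ht₀ : t₀ ∈ I := Set.left_mem_Icc.2 (by linarith)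
  have hD : ∀ k ≤ n + 1, ∀ t ∈ I, iteratedDerivWithin k ψ I t = iteratedDeriv k ψ t :=
    fun k hk t ht => iteratedDerivWithin_eq_iteratedDeriv (uniqueDiffOn_Icc (by linarith))
      ((hψ t ht).of_le (by exact_mod_cast hk)) ht
  have hnode : ∀ j : Fin (n + 1), t₀ + j * h ∈ I := fun j => by
    have : (j : ℝ) ≤ n := by exact_mod_cast Nat.lt_succ_iff.mp j.isLt
    constructor <;> nlinarith
  have hrem : ∀ j : Fin (n + 1), |ψ (t₀ + j * h) - taylorWithinEval ψ n I t₀ (t₀ + j * h)|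
      ≤ B * ((n : ℝ) ^ (n + 1) / n !) * h ^ (n + 1) := fun j => by
    have hI : ContDiffOn ℝ (n + 1) ψ I := fun t ht => (hψ t ht).contDiffWithinAt
    have := taylor_mean_remainder_bound (by linarith) hI (hnode j) fun t ht => by
      rw [Real.norm_eq_abs, hD _ le_rfl t ht]; exact hB t ht
    have hB0 : 0 ≤ B := (abs_nonneg _).trans (hB t₀ ht₀)
    have hj : (j : ℝ) * h ≤ n * h := by linarith [(hnode j).2]
    rw [Real.norm_eq_abs, add_sub_cancel_left] at this
    calc _ ≤ B * ((j : ℝ) * h) ^ (n + 1) / n ! := this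
      _ ≤ B * ((n : ℝ) * h) ^ (n + 1) / n ! := by gcongr
      _ = B * ((n : ℝ) ^ (n + 1) / n !) * h ^ (n + 1) := by ring
  have hmoments : ∑ j, W j * taylorWithinEval ψ n I t₀ (t₀ + j * h) = h * deriv ψ t₀ := by
    calc ∑ j, W j * taylorWithinEval ψ n I t₀ (t₀ + j * h)
        = ∑ k ∈ range (n + 1), ((k ! : ℝ)⁻¹ * h ^ k * iteratedDerivWithin k ψ I t₀)
            * ∑ j, W j * (j : ℝ) ^ k := by
          simp only [taylor_within_apply, add_sub_cancel_left, smul_eq_mul, mul_sum]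
          rw [sum_comm]
          refine sum_congr rfl fun k _ => sum_congr rfl fun j _ => by ring
      _ = h * deriv ψ t₀ := by
          rw [sum_eq_single 1, hW 1 hn, hD 1 (by omega) t₀ ht₀, iteratedDeriv_one]
          · simp
          · intro k hk hk1
            rw [hW k (mem_range_succ_iff.1 hk), if_neg hk1, mul_zero]
          · exact fun h1 => absurd (Finset.mem_range.2 (by omega)) h1
  calc |h * deriv ψ t₀ - ∑ j, W j * ψ (t₀ + j * h)|
      = |∑ j, W j * (taylorWithinEval ψ n I t₀ (t₀ + j * h) - ψ (t₀ + j * h))| := by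
        rw [← hmoments, ← sum_sub_distrib]
        simp only [mul_sub]
    _ ≤ ∑ j, |W j| * (B * ((n : ℝ) ^ (n + 1) / n !) * h ^ (n + 1)) := by
        refine (abs_sum_le_sum_abs _ _).trans (sum_le_sum fun j _ => ?_)
        rw [abs_mul, abs_sub_comm]
        exact mul_le_mul_of_nonneg_left (hrem j) (abs_nonneg _)
    _ = (∑ j, |W j|) * ((n : ℝ) ^ (n + 1) / n !) * B * h ^ (n + 1) := by
        rw [← sum_mul]; ring

lemma exists_abs_deriv_le_div_add_mul_pow {n : ℕ} (hn : 1 ≤ n) :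
    ∃ C > (0 : ℝ), ∀ (ψ : ℝ → ℝ) (t₀ h A B : ℝ), 0 < h →
      (∀ t ∈ Icc t₀ (t₀ + n * h), ContDiffAt ℝ (n + 1) ψ t) →
      (∀ j : Fin (n + 1), |ψ (t₀ + j * h)| ≤ A) →
      (∀ t ∈ Icc t₀ (t₀ + n * h), |iteratedDeriv (n + 1) ψ t| ≤ B) →
      |deriv ψ t₀| ≤ C * (A / h + B * h ^ n) := by
  obtain ⟨W, hW⟩ := exists_sum_mul_natCast_pow_eq n fun r => if r = 1 then 1 else 0
  set S := ∑ j, |W j|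
  set K := ((n : ℝ) ^ (n + 1) / n !)
  have hS : 0 ≤ S := sum_nonneg fun j _ => abs_nonneg _
  have hK : 0 ≤ K := by positivity
  refine ⟨S * (1 + K) + 1, by positivity, fun ψ t₀ h A B hh hψ hA hB => ?_⟩
  have hA0 : 0 ≤ A := (abs_nonneg _).trans (hA 0)
  have hB0 : 0 ≤ B :=
    (abs_nonneg _).trans (hB t₀ (Set.left_mem_Icc.2 (le_add_of_nonneg_right (by positivity))))
  have hnodes : |∑ j, W j * ψ (t₀ + j * h)| ≤ S * A := by
    refine (abs_sum_le_sum_abs _ _).trans ?_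
    rw [sum_mul]
    refine sum_le_sum fun j _ => ?_
    rw [abs_mul]
    exact mul_le_mul_of_nonneg_left (hA j) (abs_nonneg _)
  have hscaled : h * |deriv ψ t₀| ≤ S * A + S * K * B * h ^ (n + 1) := by
    have hfd := abs_mul_deriv_sub_sum_le hn hW hh hψ hB
    calc h * |deriv ψ t₀| = |h * deriv ψ t₀| := by rw [abs_mul, abs_of_pos hh]
      _ ≤ S * A + S * K * B * h ^ (n + 1) := by
          linarith [abs_sub_abs_le_abs_sub (h * deriv ψ t₀) (∑ j, W j * ψ (t₀ + j * h))]
  have hAh : 0 ≤ A / h := by positivity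
  have hBh : 0 ≤ B * h ^ n := by positivity
  calc |deriv ψ t₀| ≤ S * (A / h) + S * K * (B * h ^ n) := by
        have hexpand :
            h * (S * (A / h) + S * K * (B * h ^ n)) = S * A + S * K * B * h ^ (n + 1) := by
          field_simp
          ring
        rw [← mul_le_mul_iff_of_pos_left hh, hexpand]
        exact hscaled
    _ ≤ (S * (1 + K) + 1) * (A / h + B * h ^ n) := by nlinarith [mul_nonneg hS hK]

end FiniteDifferences

def IsOPowOnCompacts {s : ℕ} (Ω : Set (Fin s → ℝ)) (a : ℝ) (F : ℝ → (Fin s → ℝ) → ℝ) : Prop :=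
  ∀ L ⊆ Ω, IsCompact L → ∃ C > (0 : ℝ), ∃ ε₀ ∈ Ioc (0 : ℝ) 1, ∀ ε ∈ Ioo (0 : ℝ) ε₀, ∀ x ∈ L,
    |F ε x| ≤ C * ε ^ a

namespace IsOPowOnCompacts

variable {s : ℕ} {Ω : Set (Fin s → ℝ)} {a b : ℝ} {F : ℝ → (Fin s → ℝ) → ℝ}

lemma mono (hF : IsOPowOnCompacts Ω a F) (hba : b ≤ a) : IsOPowOnCompacts Ω b F := by
  intro L hLΩ hL
  obtain ⟨C, hC, ε₀, hε₀, hFC⟩ := hF L hLΩ hL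
  refine ⟨C, hC, ε₀, hε₀, fun ε hε x hx => (hFC ε hε x hx).trans ?_⟩
  exact mul_le_mul_of_nonneg_left
    (Real.rpow_le_rpow_of_exponent_ge hε.1 (hε.2.trans_le hε₀.2).le hba) hC.le

lemma pd_mul_div_succ (hΩ : IsOpen Ω) {n : ℕ} (hn : 1 ≤ n) (i : Fin s)
    (hsmooth : ∀ ε ∈ Ioc (0 : ℝ) 1, ContDiffOn ℝ (n + 1) (F ε) Ω)
    (hderiv : IsOPowOnCompacts Ω 0 fun ε => pdMulti (List.replicate (n + 1) i) (F ε))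
    (hF : IsOPowOnCompacts Ω a F) (ha : 0 ≤ a) :
    IsOPowOnCompacts Ω (a * n / (n + 1)) fun ε => pd i (F ε) := by
  intro K hKΩ hK
  obtain ⟨δ, hδ, hδΩ⟩ := hK.exists_cthickening_subset_open hΩ hKΩ
  have hL : IsCompact (Metric.cthickening δ K) := hK.cthickening
  obtain ⟨A, hA, ε₁, hε₁, hFA⟩ := hF _ hδΩ hL
  obtain ⟨B, hB, ε₂, hε₂, hFB⟩ := hderiv _ hδΩ hL
  obtain ⟨C, hC, hmarkov⟩ := exists_abs_deriv_le_div_add_mul_pow hn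
  have hn0 : (0 : ℝ) < n := by exact_mod_cast hn
  set r := δ / n
  have hr : 0 < r := by positivity
  refine ⟨C * (A / r + B * r ^ n), by positivity, min ε₁ ε₂,
    ⟨lt_min hε₁.1 hε₂.1, min_le_of_left_le hε₁.2⟩, fun ε hε x hx => ?_⟩
  have hε0 : 0 < ε := hε.1
  have hεε₁ : ε < ε₁ := hε.2.trans_le (min_le_left _ _)
  have hεε₂ : ε < ε₂ := hε.2.trans_le (min_le_right _ _)
  have hε1 : ε ≤ 1 := (hεε₁.trans_le hε₁.2).le
  -- the step size `h = r e` balances the two terms of the one-dimensional estimate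
  set e := ε ^ (a / (n + 1))
  have he0 : 0 < e := Real.rpow_pos_of_pos hε0 _
  have he1 : e ≤ 1 := Real.rpow_le_one hε0.le hε1 (by positivity)
  have hεa : ε ^ a = e ^ (n + 1) := by
    rw [← Real.rpow_mul_natCast hε0.le]; push_cast; field_simp
  have hεb : ε ^ (a * n / (n + 1)) = e ^ n := by
    rw [← Real.rpow_mul_natCast hε0.le]; ring_nf
  have hseg : ∀ t ∈ Icc (x i) (x i + n * (r * e)),
      Function.update x i t ∈ Metric.cthickening δ K := fun t ht => by
    refine Metric.closedBall_subset_cthickening hx δ ?_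
    have hnr : (n : ℝ) * r = δ := by simp only [r]; field_simp
    rw [Metric.mem_closedBall, dist_update_self, Real.dist_eq,
      abs_of_nonneg (by linarith [ht.1])]
    nlinarith [ht.2]
  have key := hmarkov (fun u => F ε (Function.update x i u)) (x i) (r * e) (A * ε ^ a) B
    (by positivity)
    (fun t ht => ((hsmooth ε ⟨hε0, hε1⟩).contDiffAt (hΩ.mem_nhds (hδΩ (hseg t ht)))).comp t
      (contDiff_update _ x i).contDiffAt)
    (fun j => hFA ε ⟨hε0, hεε₁⟩ _ (hseg _ ⟨le_add_of_nonneg_right (by positivity), by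
      have : (j : ℝ) ≤ n := by exact_mod_cast Nat.lt_succ_iff.mp j.isLt
      linarith [mul_le_mul_of_nonneg_right this (mul_pos hr he0).le]⟩))
    (fun t ht => by
      rw [iteratedDeriv_comp_update]
      simpa using hFB ε ⟨hε0, hεε₂⟩ _ (hseg t ht))
  calc |pd i (F ε) x| ≤ C * (A * ε ^ a / (r * e) + B * (r * e) ^ n) := key
    _ = C * (A / r + B * r ^ n) * ε ^ (a * n / (n + 1)) := by
      rw [hεa, hεb]
      field_simp
      ring

lemma pd (hΩ : IsOpen Ω) (i : Fin s)
    (hsmooth : ∀ ε ∈ Ioc (0 : ℝ) 1, ContDiffOn ℝ (⊤ : ℕ∞) (F ε) Ω)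
    (hderiv : ∀ γ, IsOPowOnCompacts Ω 0 fun ε => pdMulti γ (F ε))
    (hF : IsOPowOnCompacts Ω a F) (hba : b < a) :
    IsOPowOnCompacts Ω b fun ε => pd i (F ε) := by
  rcases le_or_gt b 0 with hb | hb
  · exact (hderiv [i]).mono hb
  have hab : 0 < a - b := sub_pos.2 hba
  obtain ⟨n, hn⟩ := exists_nat_gt (a / (a - b))
  rw [div_lt_iff₀ hab] at hn
  have hn1 : 1 ≤ n := by
    have : (0 : ℝ) < n := by nlinarith
    exact_mod_cast this
  refine (pd_mul_div_succ hΩ hn1 i (fun ε hε => (hsmooth ε hε).of_le (by exact_mod_cast le_top))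
    (hderiv _) hF (by linarith)).mono ?_
  rw [le_div_iff₀ (by positivity)]
  nlinarith

lemma pdMulti (hΩ : IsOpen Ω)
    (hsmooth : ∀ ε ∈ Ioc (0 : ℝ) 1, ContDiffOn ℝ (⊤ : ℕ∞) (F ε) Ω)
    (hderiv : ∀ γ, IsOPowOnCompacts Ω 0 fun ε => pdMulti γ (F ε))
    (hF : IsOPowOnCompacts Ω a F) (β : List (Fin s)) (hba : b < a) :
    IsOPowOnCompacts Ω b fun ε => pdMulti β (F ε) := by
  induction β generalizing b with
  | nil => exact hF.mono hba.le
  | cons i β ih =>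
    refine (ih (b := (a + b) / 2) (by linarith)).pd hΩ i
      (fun ε hε => (hsmooth ε hε).pdMulti hΩ β) (fun γ => ?_) (by linarith)
    simpa only [pdMulti_append] using hderiv (γ ++ β)

end IsOPowOnCompacts

theorem derivative_transfer_general {s : ℕ}
    (Ω : Set (Fin s → ℝ)) (hΩ : IsOpen Ω)
    (q : ℕ)
    (c : ℝ → (Fin s → ℝ) → ℝ)
    (hsmooth : ∀ ε ∈ Ioc (0:ℝ) 1, ContDiffOn ℝ (⊤ : ℕ∞) (c ε) Ω)
    (hbd : ∀ L : Set (Fin s → ℝ), L ⊆ Ω → IsCompact L → ∀ β : List (Fin s),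
      ∃ C > (0:ℝ), ∃ ε₀ ∈ Ioc (0:ℝ) 1, ∀ ε ∈ Ioo (0:ℝ) ε₀, ∀ x ∈ L,
        |pdMulti β (c ε) x| ≤ C)
    (hsmall : ∀ L : Set (Fin s → ℝ), L ⊆ Ω → IsCompact L →
      ∃ C > (0:ℝ), ∃ ε₀ ∈ Ioc (0:ℝ) 1, ∀ ε ∈ Ioo (0:ℝ) ε₀, ∀ x ∈ L,
        |c ε x| ≤ C * ε ^ (q:ℝ)) :
    ∀ K : Set (Fin s → ℝ), K ⊆ Ω → IsCompact K → ∀ β : List (Fin s),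
      ∃ C > (0:ℝ), ∃ ε₀ ∈ Ioc (0:ℝ) 1, ∀ ε ∈ Ioo (0:ℝ) ε₀, ∀ x ∈ K,
        |pdMulti β (c ε) x| ≤ C * ε ^ ((q:ℝ) - 1) := by
  intro K hKΩ hK β
  have hderiv : ∀ γ, IsOPowOnCompacts Ω 0 fun ε => pdMulti γ (c ε) := fun γ L hLΩ hL => by
    simpa only [Real.rpow_zero, mul_one] using hbd L hLΩ hL γ
  exact IsOPowOnCompacts.pdMulti hΩ hsmooth hderiv hsmall β (sub_one_lt _) K hKΩ hK

/-- **Derivative transfer for asymptotically small smooth families.**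
If `c(ε,·)` is smooth on `Ω`, all its partial derivatives are `O(1)` on compact subsets,
and `sup_L |c(ε,·)| = O(ε^q)` on every compact `L ⊆ Ω` with `q ≥ 2`, then every partial
derivative satisfies `sup_K |∂^β c(ε,·)| = O(ε^{q-1})` on every compact `K ⊆ Ω`. -/
theorem derivative_transfer {s : ℕ}
    (Ω : Set (Fin s → ℝ)) (hΩ : IsOpen Ω)
    (q : ℕ) (hq : 2 ≤ q)
    (c : ℝ → (Fin s → ℝ) → ℝ)
    (hsmooth : ∀ ε ∈ Ioc (0:ℝ) 1, ContDiffOn ℝ (⊤ : ℕ∞) (c ε) Ω)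
    (hbd : ∀ L : Set (Fin s → ℝ), L ⊆ Ω → IsCompact L → ∀ β : List (Fin s),
      ∃ C > (0:ℝ), ∃ ε₀ ∈ Ioc (0:ℝ) 1, ∀ ε ∈ Ioo (0:ℝ) ε₀, ∀ x ∈ L,
        |pdMulti β (c ε) x| ≤ C)
    (hsmall : ∀ L : Set (Fin s → ℝ), L ⊆ Ω → IsCompact L →
      ∃ C > (0:ℝ), ∃ ε₀ ∈ Ioc (0:ℝ) 1, ∀ ε ∈ Ioo (0:ℝ) ε₀, ∀ x ∈ L,
        |c ε x| ≤ C * ε ^ (q:ℝ)) :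
    ∀ K : Set (Fin s → ℝ), K ⊆ Ω → IsCompact K → ∀ β : List (Fin s),
      ∃ C > (0:ℝ), ∃ ε₀ ∈ Ioc (0:ℝ) 1, ∀ ε ∈ Ioo (0:ℝ) ε₀, ∀ x ∈ K,
        |pdMulti β (c ε) x| ≤ C * ε ^ ((q:ℝ) - 1) :=
  derivative_transfer_general Ω hΩ q c hsmooth hbd hsmall
end
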